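/- arXiv:1110.5432 — 2 statements merged into one kernel-verified Lean document; each statement's English description precedes it below -/
import Mathlib

section
/- Suppose 0 < ν ≤ 1/4 and 0 < z ≤ ν². Then the roots w_± = z − 1/2 ± (1/2)√(1 − 8z − 4ν²) are real and satisfy −1 ≤ w₋ ≤ −3/8 and −6ν² ≤ w₊ ≤ −ν². -/
/-! Each bound compares `√(1 − 8z − 4ν²)` with an affine expression in `z` and `ν²`,
and is settled by squaring: `(1 − 2z − 2ν²)² − (1 − 8z − 4ν²) = 4z + 4(z + ν²)² ≥ 0`, while
`(1 − 8z − 4ν²) − (1 − 2z − 12ν²)² = 20ν² − 4z − (2z + 12ν²)² ≥ 16ν² − 196ν⁴ ≥ 0` for `ν² ≤ 1/16`.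
The bound `w₋ ≤ −3/8` only needs `√· ≥ 0`. -/

lemma sqrt_discriminant_le {z t : ℝ} (hz : 0 ≤ z) (h : 2 * z + 2 * t ≤ 1) :
    Real.sqrt (1 - 8 * z - 4 * t) ≤ 1 - 2 * z - 2 * t :=
  Real.sqrt_le_iff.mpr ⟨by linarith, by nlinarith [sq_nonneg (z + t)]⟩

lemma le_sqrt_discriminant {z t : ℝ} (hz : 0 ≤ z) (hzt : z ≤ t) (ht : t ≤ 1 / 16) :
    1 - 2 * z - 12 * t ≤ Real.sqrt (1 - 8 * z - 4 * t) :=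
  (le_abs_self _).trans <| Real.abs_le_sqrt <| by nlinarith

/-- For `0 < ν ≤ 1/4` and `0 < z ≤ ν²`, the roots
`w_± = z − 1/2 ± (1/2)√(1 − 8z − 4ν²)` satisfy
`−1 ≤ w₋ ≤ −3/8` and `−6ν² ≤ w₊ ≤ −ν²`. -/
theorem roots_bound_small_z (ν z : ℝ) (hν : 0 < ν) (hν' : ν ≤ 1 / 4)
    (hz : 0 < z) (hz' : z ≤ ν ^ 2) :
    (-1 ≤ z - 1 / 2 - (1 / 2) * Real.sqrt (1 - 8 * z - 4 * ν ^ 2) ∧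
      z - 1 / 2 - (1 / 2) * Real.sqrt (1 - 8 * z - 4 * ν ^ 2) ≤ -(3 / 8)) ∧
    (-(6 * ν ^ 2) ≤ z - 1 / 2 + (1 / 2) * Real.sqrt (1 - 8 * z - 4 * ν ^ 2) ∧
      z - 1 / 2 + (1 / 2) * Real.sqrt (1 - 8 * z - 4 * ν ^ 2) ≤ -(ν ^ 2)) := by
  have hν2 : ν ^ 2 ≤ 1 / 16 := by nlinarith
  have hν2_nonneg : 0 ≤ ν ^ 2 := sq_nonneg ν
  have hupper := sqrt_discriminant_le (t := ν ^ 2) hz.le (by linarith)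
  have hlower := le_sqrt_discriminant hz.le hz' hν2
  have hsqrt_nonneg := Real.sqrt_nonneg (1 - 8 * z - 4 * ν ^ 2)
  refine ⟨⟨?_, ?_⟩, ?_, ?_⟩ <;> linarith
end

section
/- There exist constants C > 0 and c₀ > 0 such that for every integer k' ≥ 0, ∫₀^π p·e^{−c₀ p k'}·(1 + ln(1/p)) dp ≤ C (1+k')^{−2} (1 + ln(1+k')). -/
/-!
Put `K = 1 + k'` and take `c₀ = 1`. On `(0, π]` we have `e^{-pk'} ≤ e^π e^{-Kp}`, and
`log x ≤ x - 1` applied to `x = 1/(pK)` gives `1 + log (1/p) ≤ log K + 1/(pK)`. Hence the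
integrand is at most `e^π (log K · p e^{-Kp} + e^{-Kp}/K)`, whose integral over `[0, π]` is at
most `e^π (log K / K² + 1/K²)`.
-/

open Real intervalIntegral

lemma one_add_log_one_div_le {p K : ℝ} (hp : 0 < p) (hK : 0 < K) :
    1 + log (1 / p) ≤ log K + 1 / (p * K) := by
  have hpK : 0 < 1 / (p * K) := by positivity
  have hsplit : log (1 / p) = log K + log (1 / (p * K)) := by
    rw [← log_mul hK.ne' hpK.ne']
    field_simp
  linarith [log_le_sub_one_of_pos hpK]

lemma exp_neg_mul_le_exp_mul_exp_neg_mul {p b : ℝ} (k : ℝ) (hpb : p ≤ b) :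
    exp (-1 * p * k) ≤ exp b * exp (-((1 + k) * p)) := by
  rw [← exp_add, exp_le_exp]
  linarith

lemma Continuous.mul_mul_one_add_log_one_div {g : ℝ → ℝ} (hg : Continuous g) :
    Continuous fun p => p * g p * (1 + Real.log (1 / p)) :=
  ((continuous_id.sub continuous_mul_log).mul hg).congr fun p => by
    rw [Pi.mul_apply, Pi.sub_apply, id, one_div, log_inv]
    ring

lemma mul_exp_mul_one_add_log_one_div_le {p b k : ℝ} (hk : 0 ≤ k) (hp : 0 < p) (hpb : p ≤ b) :
    p * exp (-1 * p * k) * (1 + log (1 / p)) ≤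
      exp b * (log (1 + k) * (p * exp (-((1 + k) * p))) + exp (-((1 + k) * p)) / (1 + k)) := by
  have hK : 0 < 1 + k := by linarith
  have hexp := exp_neg_mul_le_exp_mul_exp_neg_mul k hpb
  have hlog : 0 ≤ log (1 + k) := log_nonneg (by linarith)
  calc p * exp (-1 * p * k) * (1 + log (1 / p))
      ≤ p * exp (-1 * p * k) * (log (1 + k) + 1 / (p * (1 + k))) :=
        mul_le_mul_of_nonneg_left (one_add_log_one_div_le hp hK) (by positivity)
    _ = log (1 + k) * (p * exp (-1 * p * k)) + exp (-1 * p * k) / (1 + k) := by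
        field_simp
    _ ≤ log (1 + k) * (p * (exp b * exp (-((1 + k) * p)))) +
          exp b * exp (-((1 + k) * p)) / (1 + k) := by
        gcongr
    _ = _ := by ring

lemma hasDerivAt_exp_neg_mul (a p : ℝ) :
    HasDerivAt (fun p => exp (-(a * p))) (-a * exp (-(a * p))) p := by
  simpa [mul_comm] using ((hasDerivAt_id p).const_mul a).fun_neg.exp

lemma integral_exp_neg_mul_le {a b : ℝ} (ha : 0 < a) :
    ∫ p in (0 : ℝ)..b, exp (-(a * p)) ≤ 1 / a := by
  have hderiv : ∀ p ∈ Set.uIcc 0 b,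
      HasDerivAt (fun p => exp (-(a * p)) * (-1 / a)) (exp (-(a * p))) p := fun p _ =>
    ((hasDerivAt_exp_neg_mul a p).mul_const (-1 / a)).congr_deriv (by field_simp)
  rw [integral_eq_sub_of_hasDerivAt hderiv
    (Continuous.intervalIntegrable (by fun_prop) _ _)]
  have : 0 ≤ exp (-(a * b)) / a := by positivity
  simp only [mul_zero, neg_zero, exp_zero]
  linarith [show exp (-(a * b)) * (-1 / a) - 1 * (-1 / a) = 1 / a - exp (-(a * b)) / a by ring]

lemma integral_mul_exp_neg_mul_le {a b : ℝ} (ha : 0 < a) (hb : 0 ≤ b) :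
    ∫ p in (0 : ℝ)..b, p * exp (-(a * p)) ≤ 1 / a ^ 2 := by
  have hderiv : ∀ p ∈ Set.uIcc 0 b, HasDerivAt (fun p => -(p / a + 1 / a ^ 2) * exp (-(a * p)))
      (p * exp (-(a * p))) p := fun p _ =>
    ((((hasDerivAt_id' p).div_const a).add_const _).fun_neg.mul
      (hasDerivAt_exp_neg_mul a p)).congr_deriv (by field_simp; ring)
  rw [integral_eq_sub_of_hasDerivAt hderiv
    (Continuous.intervalIntegrable (by fun_prop) _ _)]
  have : 0 ≤ (b / a + 1 / a ^ 2) * exp (-(a * b)) := by positivity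
  simp only [zero_div, zero_add, mul_zero, neg_zero, exp_zero, mul_one]
  linarith [neg_mul (b / a + 1 / a ^ 2) (exp (-(a * b)))]

/-- There are constants `C, c₀ > 0` such that for every integer `k' ≥ 0`,
`∫₀^π p e^{−c₀ p k'}(1 + ln(1/p)) dp ≤ C (1+k')⁻² (1 + ln(1+k'))`. -/
theorem kernel_decay_estimate :
    ∃ C > (0 : ℝ), ∃ c₀ > (0 : ℝ), ∀ k' : ℕ,
      ∫ p in (0:ℝ)..π, p * Real.exp (-c₀ * p * k') * (1 + Real.log (1 / p))
        ≤ C / (1 + (k' : ℝ)) ^ 2 * (1 + Real.log (1 + (k' : ℝ))) := by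
  refine ⟨exp π, exp_pos π, 1, one_pos, fun k' => ?_⟩
  have hk : (0 : ℝ) ≤ k' := k'.cast_nonneg
  set K : ℝ := 1 + k'
  have hK : 0 < K := by positivity
  calc ∫ p in (0:ℝ)..π, p * exp (-1 * p * k') * (1 + log (1 / p))
      ≤ ∫ p in (0:ℝ)..π, exp π * (log K * (p * exp (-(K * p))) + exp (-(K * p)) / K) :=
        integral_mono_on_of_le_Ioo pi_pos.le
          ((Continuous.mul_mul_one_add_log_one_div (by fun_prop)).intervalIntegrable _ _)
          (Continuous.intervalIntegrable (by fun_prop) _ _)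
          fun p hp => mul_exp_mul_one_add_log_one_div_le hk hp.1 hp.2.le
    _ = exp π * (log K * ∫ p in (0:ℝ)..π, p * exp (-(K * p))) +
          exp π * ((∫ p in (0:ℝ)..π, exp (-(K * p))) / K) := by
        rw [integral_const_mul, integral_add (Continuous.intervalIntegrable (by fun_prop) _ _)
          (Continuous.intervalIntegrable (by fun_prop) _ _), integral_const_mul, integral_div,
          mul_add]
    _ ≤ exp π * (log K * (1 / K ^ 2)) + exp π * (1 / K / K) := by
        have hlog : 0 ≤ log K := log_nonneg (by linarith)
        gcongr
        · exact integral_mul_exp_neg_mul_le hK pi_pos.le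
        · exact integral_exp_neg_mul_le hK
    _ = exp π / K ^ 2 * (1 + log K) := by
        field_simp
        ring
end
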